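/- arXiv:0708.3396 — 3 statements merged into one kernel-verified Lean document; each statement's English description precedes it below -/
import Mathlib

section
/- For every m ≥ 1 and every j with 0 ≤ j ≤ m−1, one has ∑_{i=0}^{m−j−1} (A_m(i+j) − A_m(i+j+1)) · ξ_i = ξ_j. -/
open Finset Nat

/-- Weighted symmetry: `2 ∑ i·aᵢa_{n−i} = n ∑ aᵢa_{n−i}` for any symmetric-style weight. -/
lemma weighted_symm (c : ℕ → ℕ) (n : ℕ) :
    2 * (∑ i ∈ Finset.range (n + 1), i * (c i * c (n - i))) =
      n * ∑ i ∈ Finset.range (n + 1), c i * c (n - i) := by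
  have h := Finset.sum_range_reflect (fun i => i * (c i * c (n - i))) (n + 1)
  have h2 : ∀ i ∈ Finset.range (n + 1),
      (n + 1 - 1 - i) * (c (n + 1 - 1 - i) * c (n - (n + 1 - 1 - i)))
        = (n - i) * (c (n - i) * c i) := by
    intro i hi
    simp only [Finset.mem_range] at hi
    have e1 : n + 1 - 1 - i = n - i := by omega
    have e2 : n - (n - i) = i := by omega
    rw [e1, e2]
  rw [Finset.sum_congr rfl h2] at h
  have := Finset.sum_congr rfl (fun i hi => by
    have hi' : i < n + 1 := Finset.mem_range.mp hi
    show i * (c i * c (n - i)) + (n - i) * (c (n - i) * c i) = n * (c i * c (n - i))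
    have hin : i + (n - i) = n := by omega
    rw [Nat.mul_comm (c (n - i)) (c i), ← Nat.add_mul, hin])
  calc 2 * (∑ i ∈ Finset.range (n + 1), i * (c i * c (n - i)))
      = (∑ i ∈ Finset.range (n + 1), i * (c i * c (n - i)))
        + ∑ i ∈ Finset.range (n + 1), (n - i) * (c (n - i) * c i) := by rw [h, Nat.two_mul]
    _ = ∑ i ∈ Finset.range (n + 1), (i * (c i * c (n - i)) + (n - i) * (c (n - i) * c i)) := by
        rw [Finset.sum_add_distrib]
    _ = ∑ i ∈ Finset.range (n + 1), n * (c i * c (n - i)) := this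
    _ = n * ∑ i ∈ Finset.range (n + 1), c i * c (n - i) := by rw [Finset.mul_sum]

/-- The central binomial convolution identity. -/
lemma centralBinom_conv (n : ℕ) :
    ∑ i ∈ Finset.range (n + 1), Nat.centralBinom i * Nat.centralBinom (n - i) = 4 ^ n := by
  induction n with
  | zero => simp [Nat.centralBinom]
  | succ n ih =>
    set c := Nat.centralBinom with hc
    have key : (n + 1) * ∑ i ∈ Finset.range (n + 2), c i * c (n + 1 - i)
        = (n + 1) * (4 ^ (n + 1)) := by
      have h1 := weighted_symm c (n + 1)
      have hT : (∑ i ∈ Finset.range (n + 2), i * (c i * c (n + 1 - i)))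
          = ∑ k ∈ Finset.range (n + 1), 2 * (2 * k + 1) * (c k * c (n - k)) := by
        rw [Finset.sum_range_succ' (fun i => i * (c i * c (n + 1 - i))) (n + 1)]
        simp only [Nat.zero_mul, Nat.add_zero]
        apply Finset.sum_congr rfl
        intro k hk
        simp only [Finset.mem_range] at hk
        have hsub : n + 1 - (k + 1) = n - k := by omega
        have hrec := Nat.succ_mul_centralBinom_succ k
        rw [hsub]
        calc (k + 1) * (c (k + 1) * c (n - k)) = ((k + 1) * c (k + 1)) * c (n - k) := by ring
          _ = (2 * (2 * k + 1) * c k) * c (n - k) := by rw [hrec]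
          _ = 2 * (2 * k + 1) * (c k * c (n - k)) := by ring
      have h2 := weighted_symm c n
      have expand : ∑ k ∈ Finset.range (n + 1), 2 * (2 * k + 1) * (c k * c (n - k))
          = 4 * (∑ k ∈ Finset.range (n + 1), k * (c k * c (n - k)))
            + 2 * ∑ k ∈ Finset.range (n + 1), c k * c (n - k) := by
        rw [Finset.mul_sum, Finset.mul_sum, ← Finset.sum_add_distrib]
        apply Finset.sum_congr rfl
        intro k _; ring
      -- 2T = (n+1) S(n+1); T = 4U + 2 Sn; 2U = n Sn
      have : (n + 1) * ∑ i ∈ Finset.range (n + 2), c i * c (n + 1 - i)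
          = 2 * (∑ i ∈ Finset.range (n + 2), i * (c i * c (n + 1 - i))) := h1.symm
      rw [this, hT, expand, ih]
      have h2' : 2 * (∑ k ∈ Finset.range (n + 1), k * (c k * c (n - k))) = n * 4 ^ n := by
        rw [h2, ih]
      calc 2 * (4 * (∑ k ∈ Finset.range (n + 1), k * (c k * c (n - k))) + 2 * 4 ^ n)
          = 4 * (2 * (∑ k ∈ Finset.range (n + 1), k * (c k * c (n - k)))) + 4 * 4 ^ n := by ring
        _ = 4 * (n * 4 ^ n) + 4 * 4 ^ n := by rw [h2']
        _ = (n + 1) * 4 ^ (n + 1) := by ring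
    exact Nat.eq_of_mul_eq_mul_left (by omega) key

/-- `ξ i = C(2i, i) / 4^i`. -/
noncomputable def xi (i : ℕ) : ℝ := (Nat.choose (2 * i) i : ℝ) / 4 ^ i

lemma xi_eq (i : ℕ) : xi i = (Nat.centralBinom i : ℝ) / 4 ^ i := by
  rw [xi, Nat.centralBinom_eq_two_mul_choose]

/-- The real convolution identity `∑_{i=0}^n ξ_i ξ_{n−i} = 1`. -/
lemma xi_conv (n : ℕ) : ∑ i ∈ Finset.range (n + 1), xi i * xi (n - i) = 1 := by
  have key : ∀ i ∈ Finset.range (n + 1),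
      xi i * xi (n - i) = ((Nat.centralBinom i * Nat.centralBinom (n - i) : ℕ) : ℝ) / 4 ^ n := by
    intro i hi
    simp only [Finset.mem_range] at hi
    rw [xi_eq, xi_eq]
    have hpow : (4 : ℝ) ^ i * 4 ^ (n - i) = 4 ^ n := by
      rw [← pow_add]; congr 1; omega
    push_cast
    rw [_root_.div_mul_div_comm, hpow]
  rw [Finset.sum_congr rfl key, ← Finset.sum_div, ← Nat.cast_sum, centralBinom_conv]
  push_cast
  field_simp

/-- Triangle sum reindexing. -/
lemma triangle_sum (M : ℕ) (g : ℕ → ℕ → ℝ) :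
    ∑ i ∈ Finset.range M, ∑ t ∈ Finset.range (M - i), g i t
      = ∑ s ∈ Finset.range M, ∑ i ∈ Finset.range (s + 1), g i (s - i) := by
  induction M with
  | zero => simp
  | succ M ih =>
    have split : ∀ i ∈ Finset.range (M + 1),
        ∑ t ∈ Finset.range (M + 1 - i), g i t
          = (∑ t ∈ Finset.range (M - i), g i t) + g i (M - i) := by
      intro i hi
      simp only [Finset.mem_range] at hi
      have : M + 1 - i = (M - i) + 1 := by omega
      rw [this, Finset.sum_range_succ]
    rw [Finset.sum_congr rfl split, Finset.sum_add_distrib, Finset.sum_range_succ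
      (fun i => ∑ t ∈ Finset.range (M - i), g i t), Nat.sub_self, Finset.range_zero,
      Finset.sum_empty, add_zero, ih,
      Finset.sum_range_succ (fun s => ∑ i ∈ Finset.range (s + 1), g i (s - i)) M,
      Finset.sum_range_succ (fun i => g i (M - i)) M]

/-- `A_m(j) = ∑_{i=0}^{m−j−1} ξ_i ξ_{i+j}` (which is `0` when `j ≥ m`). -/
noncomputable def Am (m j : ℕ) : ℝ := ∑ i ∈ Finset.range (m - j), xi i * xi (i + j)

/-- For every `m ≥ 1` and every `j` with `0 ≤ j ≤ m−1`, one has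
`∑_{i=0}^{m−j−1} (A_m(i+j) − A_m(i+j+1)) · ξ_i = ξ_j`. -/
theorem eigenvector_condition (m j : ℕ) (hm : 1 ≤ m) (hj : j ≤ m - 1) :
    ∑ i ∈ Finset.range (m - j), (Am m (i + j) - Am m (i + j + 1)) * xi i = xi j := by
  set M := m - j with hM
  have hM1 : 1 ≤ M := by omega
  have hjm : j ≤ m := by omega
  -- rewrite each summand
  have rw1 : ∀ i ∈ Finset.range M, (Am m (i + j) - Am m (i + j + 1)) * xi i
      = (∑ t ∈ Finset.range (M - i), xi t * xi (t + (i + j))) * xi i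
        - (∑ t ∈ Finset.range (M - 1 - i), xi t * xi (t + (i + j + 1))) * xi i := by
    intro i hi
    simp only [Finset.mem_range] at hi
    have e1 : m - (i + j) = M - i := by omega
    have e2 : m - (i + j + 1) = M - 1 - i := by omega
    rw [Am, Am, e1, e2, sub_mul]
  rw [Finset.sum_congr rfl rw1, Finset.sum_sub_distrib]
  -- first double sum
  have L1 : ∑ i ∈ Finset.range M, (∑ t ∈ Finset.range (M - i), xi t * xi (t + (i + j))) * xi i
      = ∑ s ∈ Finset.range M, xi (s + j) := by
    have : ∀ i ∈ Finset.range M,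
        (∑ t ∈ Finset.range (M - i), xi t * xi (t + (i + j))) * xi i
          = ∑ t ∈ Finset.range (M - i), xi t * xi (t + (i + j)) * xi i := by
      intro i _; rw [Finset.sum_mul]
    rw [Finset.sum_congr rfl this, triangle_sum M (fun i t => xi t * xi (t + (i + j)) * xi i)]
    apply Finset.sum_congr rfl
    intro s hs
    have inner : ∀ i ∈ Finset.range (s + 1),
        xi (s - i) * xi (s - i + (i + j)) * xi i = xi (s + j) * (xi i * xi (s - i)) := by
      intro i hi
      simp only [Finset.mem_range] at hi
      have : s - i + (i + j) = s + j := by omega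
      rw [this]; ring
    rw [Finset.sum_congr rfl inner, ← Finset.mul_sum, xi_conv, mul_one]
  -- second double sum
  have L2 : ∑ i ∈ Finset.range M, (∑ t ∈ Finset.range (M - 1 - i), xi t * xi (t + (i + j + 1))) * xi i
      = ∑ s ∈ Finset.range (M - 1), xi (s + j + 1) := by
    have hMsplit : M = (M - 1) + 1 := by omega
    rw [hMsplit, Finset.sum_range_succ]
    have hlast : M - 1 + 1 - 1 - (M - 1) = 0 := by omega
    rw [hlast, Finset.range_zero, Finset.sum_empty, zero_mul, add_zero]
    have eq1 : ∀ i ∈ Finset.range (M - 1),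
        (∑ t ∈ Finset.range (M - 1 + 1 - 1 - i), xi t * xi (t + (i + j + 1))) * xi i
          = ∑ t ∈ Finset.range ((M - 1) - i), xi t * xi (t + (i + (j + 1))) * xi i := by
      intro i hi
      have : M - 1 + 1 - 1 - i = M - 1 - i := by omega
      rw [this, Finset.sum_mul]
      apply Finset.sum_congr rfl
      intro t _
      have : i + j + 1 = i + (j + 1) := by omega
      rw [this]
    rw [Finset.sum_congr rfl eq1,
      triangle_sum (M - 1) (fun i t => xi t * xi (t + (i + (j + 1))) * xi i)]
    apply Finset.sum_congr rfl
    intro s hs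
    have inner : ∀ i ∈ Finset.range (s + 1),
        xi (s - i) * xi (s - i + (i + (j + 1))) * xi i
          = xi (s + j + 1) * (xi i * xi (s - i)) := by
      intro i hi
      simp only [Finset.mem_range] at hi
      have : s - i + (i + (j + 1)) = s + j + 1 := by omega
      rw [this]; ring
    rw [Finset.sum_congr rfl inner, ← Finset.mul_sum, xi_conv, mul_one]
  rw [L1, L2]
  -- telescope
  have hMsplit : M = (M - 1) + 1 := by omega
  rw [hMsplit, Finset.sum_range_succ' (fun s => xi (s + j)) (M - 1)]
  simp only [zero_add]
  have : ∀ s, xi (s + 1 + j) = xi (s + j + 1) := by intro s; congr 1; omega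
  rw [Finset.sum_congr rfl (fun s _ => this s)]
  simp only [Nat.add_sub_cancel]
  ring
end

section
/- Let m ≥ 1 and n = 2m. Define γ_i := A_m(i−1) − A_m(i) for i = 1,…,n, let T be the n×n symmetric Toeplitz matrix with entries T[i,j] = γ_{n−|i−j|} (indices 1 ≤ i,j ≤ n, where γ_n is the diagonal entry), and let u ∈ ℝ^n be the vector with u_j = ξ_{min(j, n+1−j) − 1}, i.e. u = (ξ_0, ξ_1, …, ξ_{m−1}, ξ_{m−1}, …, ξ_1, ξ_0). Then T u = u, i.e. u is an eigenvector of T with eigenvalue 1. -/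
/-- `toeplitz n γ` is the `n×n` symmetric Toeplitz matrix `Toeplitz(γ_n, …, γ_1)` whose
`(i,j)` entry (for `1 ≤ i, j ≤ n`) is `γ_{n − |i−j|}`. -/
def toeplitz (n : ℕ) (γ : ℕ → ℝ) : Matrix (Fin n) (Fin n) ℝ :=
  Matrix.of fun i j => γ (n - (max (i : ℕ) (j : ℕ) - min (i : ℕ) (j : ℕ)))

open Finset Matrix

lemma xi_zero : xi 0 = 1 := by simp [xi]

lemma two_mul_succ_mul_xi_succ (i : ℕ) :
    2 * (i + 1 : ℝ) * xi (i + 1) = (2 * i + 1) * xi i := by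
  have h : ((i + 1 : ℕ) : ℝ) * (i + 1).centralBinom = 2 * (2 * i + 1 : ℕ) * i.centralBinom :=
    mod_cast Nat.succ_mul_centralBinom_succ i
  simp only [xi, ← Nat.centralBinom_eq_two_mul_choose, pow_succ]
  push_cast at h
  field_simp
  linear_combination 2 * h

lemma natCast_mul_sum_antidiagonal_mul {R : Type*} [CommSemiring R] (f : ℕ → R) (k : ℕ) :
    (k : R) * ∑ p ∈ antidiagonal k, f p.1 * f p.2
      = 2 * ∑ p ∈ antidiagonal k, (p.1 : R) * (f p.1 * f p.2) := by
  have hswap : ∑ p ∈ antidiagonal k, (p.2 : R) * (f p.1 * f p.2)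
      = ∑ p ∈ antidiagonal k, (p.1 : R) * (f p.1 * f p.2) := by
    rw [← Nat.sum_antidiagonal_swap]
    exact sum_congr rfl fun p _ => by simp only [Prod.fst_swap, Prod.snd_swap, mul_comm (f p.2)]
  calc (k : R) * ∑ p ∈ antidiagonal k, f p.1 * f p.2
      = ∑ p ∈ antidiagonal k, ((p.1 : R) * (f p.1 * f p.2) + (p.2 : R) * (f p.1 * f p.2)) := by
        rw [mul_sum]
        refine sum_congr rfl fun p hp => ?_
        rw [← (mem_antidiagonal.mp hp)]
        push_cast
        ring
    _ = 2 * ∑ p ∈ antidiagonal k, (p.1 : R) * (f p.1 * f p.2) := by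
        rw [sum_add_distrib, hswap, two_mul]

lemma sum_antidiagonal_xi_mul_xi (k : ℕ) : ∑ p ∈ antidiagonal k, xi p.1 * xi p.2 = 1 := by
  induction k with
  | zero => simp [xi_zero]
  | succ k ih =>
    have hshift : 2 * ∑ p ∈ antidiagonal (k + 1), (p.1 : ℝ) * (xi p.1 * xi p.2)
        = 2 * ∑ p ∈ antidiagonal k, (p.1 : ℝ) * (xi p.1 * xi p.2) + 1 := by
      rw [Nat.sum_antidiagonal_succ, ← ih]
      simp only [Nat.cast_zero, zero_mul, zero_add, mul_sum, ← sum_add_distrib]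
      refine sum_congr rfl fun p _ => ?_
      push_cast
      linear_combination xi p.2 * two_mul_succ_mul_xi_succ p.1
    have h := natCast_mul_sum_antidiagonal_mul xi (k + 1)
    rw [hshift, ← natCast_mul_sum_antidiagonal_mul, ih] at h
    push_cast at h
    have hk : (k + 1 : ℝ) ≠ 0 := by positivity
    exact mul_left_cancel₀ hk (by linarith)

lemma sum_range_xi_mul_xi_sub (k : ℕ) : ∑ t ∈ range (k + 1), xi t * xi (k - t) = 1 := by
  rw [← Nat.sum_antidiagonal_eq_sum_range_succ (fun a b => xi a * xi b),
    sum_antidiagonal_xi_mul_xi]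

lemma Am_eq_zero {m j : ℕ} (h : m ≤ j) : Am m j = 0 := by
  simp [Am, Nat.sub_eq_zero_of_le h]

lemma sum_range_Am_add_mul_xi (m j : ℕ) :
    ∑ s ∈ range (m - j), Am m (j + s) * xi s = ∑ k ∈ range (m - j), xi (j + k) := by
  let f : ℕ → ℕ → ℝ := fun s r => xi s * xi r * xi (j + (s + r))
  calc ∑ s ∈ range (m - j), Am m (j + s) * xi s
      = ∑ s ∈ range (m - j), ∑ r ∈ range (m - j - s), f s r := by
        refine sum_congr rfl fun s _ => ?_
        rw [Am, Nat.sub_sub, sum_mul]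
        exact sum_congr rfl fun r _ => by simp only [f]; ring_nf
    _ = ∑ k ∈ range (m - j), ∑ t ∈ range (k + 1), f t (k - t) :=
        (sum_range_diag_flip _ f).symm
    _ = ∑ k ∈ range (m - j), xi (j + k) := by
        refine sum_congr rfl fun k _ => ?_
        rw [← mul_one (xi (j + k)), ← sum_range_xi_mul_xi_sub k, mul_sum]
        refine sum_congr rfl fun t ht => ?_
        simp only [f, Nat.add_sub_cancel' (Nat.lt_succ_iff.mp (mem_range.mp ht))]
        ring

lemma sum_range_Am_sub_Am_mul_xi {m i : ℕ} (hi : i < m) :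
    ∑ s ∈ range (m - i), (Am m (i + s) - Am m (i + s + 1)) * xi s = xi i := by
  obtain ⟨N, hN⟩ : ∃ N, m - i = N + 1 := ⟨m - (i + 1), by omega⟩
  have hshift :
      ∑ s ∈ range (m - i), Am m (i + s + 1) * xi s = ∑ k ∈ range N, xi (i + 1 + k) := by
    have hN' : m - (i + 1) = N := by omega
    rw [hN, sum_range_succ, Am_eq_zero (by omega), zero_mul, add_zero, ← hN',
      ← sum_range_Am_add_mul_xi]
    exact sum_congr rfl fun s _ => by rw [add_right_comm]
  simp only [sub_mul]
  rw [sum_sub_distrib, sum_range_Am_add_mul_xi, hshift, hN, sum_range_succ']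
  simp only [add_zero, add_assoc, add_comm 1, add_sub_cancel_left]

noncomputable def gammaAm (m i : ℕ) : ℝ := Am m (i - 1) - Am m i

noncomputable def palindromeXi (n : ℕ) : Fin n → ℝ := fun j => xi (min (j : ℕ) (n - 1 - j))

lemma palindromeXi_rev {n : ℕ} (j : Fin n) : palindromeXi n j.rev = palindromeXi n j := by
  simp only [palindromeXi, Fin.val_rev]
  congr 1
  omega

lemma toeplitz_rev_rev (n : ℕ) (γ : ℕ → ℝ) (i j : Fin n) :
    toeplitz n γ i.rev j.rev = toeplitz n γ i j := by
  simp only [toeplitz, Matrix.of_apply, Fin.val_rev]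
  congr 1
  omega

lemma toeplitz_mulVec_rev {n : ℕ} (γ : ℕ → ℝ) {u : Fin n → ℝ}
    (hu : ∀ j, u j.rev = u j) (i : Fin n) :
    (toeplitz n γ *ᵥ u) i.rev = (toeplitz n γ *ᵥ u) i := by
  simp only [Matrix.mulVec, dotProduct]
  rw [← Equiv.sum_comp Fin.revPerm]
  simp only [Fin.revPerm_apply, toeplitz_rev_rev, hu]

lemma toeplitz_gammaAm_apply_rev {m : ℕ} {i : Fin (2 * m)} (hi : (i : ℕ) < m)
    (j : Fin (2 * m)) :
    toeplitz (2 * m) (gammaAm m) i j.rev = Am m (i + j) - Am m (i + j + 1) := by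
  simp only [toeplitz, Matrix.of_apply, Fin.val_rev, gammaAm]
  by_cases hij : (i : ℕ) + j < m
  · congr 2 <;> omega
  · rw [Am_eq_zero (by omega), Am_eq_zero (by omega), Am_eq_zero (by omega), Am_eq_zero (by omega)]

lemma toeplitz_gammaAm_mulVec_apply_of_lt {m : ℕ} {i : Fin (2 * m)} (hi : (i : ℕ) < m) :
    (toeplitz (2 * m) (gammaAm m) *ᵥ palindromeXi (2 * m)) i = xi i := by
  calc (toeplitz (2 * m) (gammaAm m) *ᵥ palindromeXi (2 * m)) i
      = ∑ j : Fin (2 * m), (Am m (i + j) - Am m (i + j + 1)) * palindromeXi (2 * m) j := by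
        simp only [Matrix.mulVec, dotProduct]
        rw [← Equiv.sum_comp Fin.revPerm]
        simp only [Fin.revPerm_apply, toeplitz_gammaAm_apply_rev hi, palindromeXi_rev]
    _ = ∑ j ∈ range (2 * m), (Am m (i + j) - Am m (i + j + 1)) * xi (min j (2 * m - 1 - j)) :=
        Fin.sum_univ_eq_sum_range
          (fun j => (Am m (i + j) - Am m (i + j + 1)) * xi (min j (2 * m - 1 - j))) _
    _ = ∑ j ∈ range (m - i), (Am m (i + j) - Am m (i + j + 1)) * xi j := by
        rw [← sum_subset (range_subset_range.mpr (by omega : m - i ≤ 2 * m))]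
        · refine sum_congr rfl fun j hj => ?_
          rw [min_eq_left (by have := mem_range.mp hj; omega)]
        · intro j _ hj
          rw [mem_range, not_lt] at hj
          rw [Am_eq_zero (by omega), Am_eq_zero (by omega), sub_self, zero_mul]
    _ = xi i := sum_range_Am_sub_Am_mul_xi hi

theorem even_eigenvector_general (m : ℕ) :
    let n := 2 * m
    let γ : ℕ → ℝ := fun i => Am m (i - 1) - Am m i
    let T := toeplitz n γ
    let u : Fin n → ℝ := fun j => xi (min (j : ℕ) (n - 1 - (j : ℕ)))
    T.mulVec u = u := by
  intro n γ T u
  change toeplitz (2 * m) (gammaAm m) *ᵥ palindromeXi (2 * m) = palindromeXi (2 * m)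
  funext i
  wlog hi : (i : ℕ) < m generalizing i
  · rw [← i.rev_rev, toeplitz_mulVec_rev _ palindromeXi_rev, palindromeXi_rev]
    exact this i.rev (by rw [Fin.val_rev]; omega)
  rw [toeplitz_gammaAm_mulVec_apply_of_lt hi, palindromeXi, min_eq_left (by omega)]

/-- Let `m ≥ 1`, `n = 2m`, `γ_i = A_m(i−1) − A_m(i)` for `i = 1, …, n`, let `T` be the
`n×n` symmetric Toeplitz matrix `Toeplitz(γ_n, …, γ_1)`, and let
`u = (ξ_0, ξ_1, …, ξ_{m−1}, ξ_{m−1}, …, ξ_1, ξ_0)`, i.e. `u_j = ξ_{min(j, n+1−j) − 1}`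
for `1 ≤ j ≤ n`.  Then `T u = u`, i.e. `u` is an eigenvector of `T` with eigenvalue `1`. -/
theorem even_eigenvector (m : ℕ) (hm : 1 ≤ m) :
    let n := 2 * m
    let γ : ℕ → ℝ := fun i => Am m (i - 1) - Am m i
    let T := toeplitz n γ
    let u : Fin n → ℝ := fun j => xi (min (j : ℕ) (n - 1 - (j : ℕ)))
    T.mulVec u = u :=
  even_eigenvector_general m
end

section
/- Weak duality for the ordered-search adversary program: let n ≥ 1, let γ_1,…,γ_n be nonnegative reals such that the spectral norm of the n×n symmetric Toeplitz matrix Toeplitz(γ_n,…,γ_1) is at most 1, and let P be an n×n positive semidefinite real matrix such that ∑_{j=1}^{n−i} P[j, j+i] ≥ 1 for every i = 0,…,n−1. Then γ_n + 2∑_{i=1}^{n−1} γ_i ≤ Tr(P). -/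
/-- The spectral norm (largest singular value) of a real matrix, as the operator norm
of its action on Euclidean space. -/
noncomputable def sNorm {n : ℕ} (M : Matrix (Fin n) (Fin n) ℝ) : ℝ :=
  ‖Matrix.toEuclideanCLM (𝕜 := ℝ) M‖

/-- The `i`-th superdiagonal sum `∑_{j=1}^{n−i} P[j, j+i]` of an `n×n` matrix `P`. -/
def sdiagSum {n : ℕ} (P : Matrix (Fin n) (Fin n) ℝ) (i : ℕ) : ℝ :=
  ∑ j : Fin n, ∑ k : Fin n, if (k : ℕ) = (j : ℕ) + i then P j k else 0

open Finset Matrix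

namespace Matrix

theorem trace_mul_transpose {ι R : Type*} [Fintype ι] [AddCommMonoid R] [Mul R]
    (A B : Matrix ι ι R) : (A * Bᵀ).trace = ∑ i, ∑ j, A i j * B i j := by
  simp only [trace, diag_apply, mul_apply, transpose_apply]

variable {ι : Type*} [Fintype ι] [DecidableEq ι]

theorem dotProduct_mulVec_le_norm_toEuclideanCLM_mul (M : Matrix ι ι ℝ) (x : ι → ℝ) :
    x ⬝ᵥ M *ᵥ x ≤ ‖toEuclideanCLM (𝕜 := ℝ) M‖ * (x ⬝ᵥ x) := by
  set y : EuclideanSpace ℝ ι := WithLp.toLp 2 x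
  have hquad : x ⬝ᵥ M *ᵥ x = inner ℝ y (toEuclideanCLM (𝕜 := ℝ) M y) := by
    rw [EuclideanSpace.inner_eq_star_dotProduct, toEuclideanCLM_toLp, star_trivial,
      dotProduct_comm]
  have hsq : x ⬝ᵥ x = ‖y‖ * ‖y‖ := by
    rw [← real_inner_self_eq_norm_mul_norm, EuclideanSpace.inner_eq_star_dotProduct, star_trivial]
  calc x ⬝ᵥ M *ᵥ x ≤ ‖y‖ * ‖toEuclideanCLM (𝕜 := ℝ) M y‖ := hquad ▸ real_inner_le_norm _ _
    _ ≤ ‖y‖ * (‖toEuclideanCLM (𝕜 := ℝ) M‖ * ‖y‖) := by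
      gcongr; exact (toEuclideanCLM (𝕜 := ℝ) M).le_opNorm y
    _ = ‖toEuclideanCLM (𝕜 := ℝ) M‖ * (x ⬝ᵥ x) := by rw [hsq]; ring

theorem posSemidef_one_sub_of_norm_toEuclideanCLM_le_one {M : Matrix ι ι ℝ}
    (hM : M.IsHermitian) (h : ‖toEuclideanCLM (𝕜 := ℝ) M‖ ≤ 1) : (1 - M).PosSemidef := by
  refine .of_dotProduct_mulVec_nonneg (isHermitian_one.sub hM) fun x => ?_
  have hx : 0 ≤ x ⬝ᵥ x := dotProduct_self_star_nonneg x
  have := dotProduct_mulVec_le_norm_toEuclideanCLM_mul M x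
  rw [star_trivial, sub_mulVec, dotProduct_sub, one_mulVec]
  nlinarith

open scoped ComplexOrder in
theorem PosSemidef.trace_mul_nonneg {𝕜 : Type*} [RCLike 𝕜] {A B : Matrix ι ι 𝕜}
    (hA : A.PosSemidef) (hB : B.PosSemidef) : 0 ≤ (A * B).trace := by
  obtain ⟨C, rfl⟩ : ∃ C : Matrix ι ι 𝕜, B = star C * C := by
    open scoped Matrix.Norms.L2Operator MatrixOrder in
    exact CStarAlgebra.nonneg_iff_eq_star_mul_self.mp hB.nonneg
  rw [← Matrix.mul_assoc, trace_mul_comm, ← Matrix.mul_assoc]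
  exact (hA.mul_mul_conjTranspose_same C).trace_nonneg

end Matrix

theorem sum_Ico_sub_eq_sum_Icc {M : Type*} [AddCommMonoid M] (f : ℕ → M) (a n : ℕ) :
    ∑ d ∈ Ico a n, f (n - d) = ∑ i ∈ Icc 1 (n - a), f i := by
  rw [sum_Ico_reflect f a (Nat.le_succ n)]
  congr 1
  ext i
  simp only [mem_Ico, mem_Icc]
  omega

theorem isHermitian_toeplitz (n : ℕ) (γ : ℕ → ℝ) : (toeplitz n γ).IsHermitian := by
  ext i j
  simp only [conjTranspose_apply, toeplitz, of_apply, star_trivial, max_comm, min_comm]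

theorem apply_dist_mul_eq_sum_ite {n a b : ℕ} (ha : a < n) (hb : b < n) (g : ℕ → ℝ) (c : ℝ) :
    g (max a b - min a b) * c =
      (∑ d ∈ range n, if b = a + d then g d * c else 0) +
        ∑ d ∈ Ico 1 n, if a = b + d then g d * c else 0 := by
  rcases le_or_gt a b with hab | hab
  · rw [sum_eq_single_of_mem (b - a) (mem_range.2 (by omega)) fun d _ hd => if_neg (by omega),
      if_pos (by omega), sum_eq_zero fun d hd => if_neg (by rw [mem_Ico] at hd; omega), add_zero,
      show max a b - min a b = b - a by omega]
  · rw [sum_eq_single_of_mem (a - b) (mem_Ico.2 (by omega)) fun d _ hd => if_neg (by omega),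
      if_pos (by omega), sum_eq_zero fun d hd => if_neg (by omega), zero_add,
      show max a b - min a b = a - b by omega]

theorem sum_apply_dist_mul_eq {n : ℕ} (P : Matrix (Fin n) (Fin n) ℝ) (g : ℕ → ℝ) :
    ∑ i : Fin n, ∑ j : Fin n, g (max (i : ℕ) j - min (i : ℕ) j) * P i j =
      ∑ d ∈ range n, g d * sdiagSum P d + ∑ d ∈ Ico 1 n, g d * sdiagSum Pᵀ d := by
  simp only [fun i j : Fin n => apply_dist_mul_eq_sum_ite i.isLt j.isLt g (P i j),
    sum_add_distrib, sdiagSum, mul_sum, mul_ite, mul_zero, transpose_apply]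
  congr 1
  · conv_lhs => enter [2, i]; rw [sum_comm]
    rw [sum_comm]
  · conv_lhs => enter [2, i]; rw [sum_comm]
    rw [sum_comm]
    conv_lhs => enter [2, d]; rw [sum_comm]

theorem trace_toeplitz_mul_eq {n : ℕ} (hn : 1 ≤ n) (γ : ℕ → ℝ) {P : Matrix (Fin n) (Fin n) ℝ}
    (hP : Pᵀ = P) :
    (toeplitz n γ * P).trace =
      γ n * sdiagSum P 0 + 2 * ∑ d ∈ Ico 1 n, γ (n - d) * sdiagSum P d := by
  nth_rw 1 [← hP]
  rw [trace_mul_transpose]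
  simp only [toeplitz, of_apply]
  rw [sum_apply_dist_mul_eq P (fun d => γ (n - d)), hP, range_eq_Ico,
    sum_eq_sum_Ico_succ_bot hn, Nat.sub_zero]
  ring

/-- Weak duality for the ordered-search adversary program: if `γ_1, …, γ_n` are nonnegative
reals such that `‖Toeplitz(γ_n, …, γ_1)‖ ≤ 1`, and `P` is an `n×n` positive semidefinite real
matrix each of whose superdiagonal sums `∑_{j=1}^{n−i} P[j, j+i]` (`0 ≤ i ≤ n−1`) is at
least `1`, then `γ_n + 2 ∑_{i=1}^{n−1} γ_i ≤ Tr(P)`. -/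
theorem weak_duality (n : ℕ) (hn : 1 ≤ n) (γ : ℕ → ℝ)
    (hpos : ∀ i, 1 ≤ i → i ≤ n → 0 ≤ γ i)
    (hnorm : sNorm (toeplitz n γ) ≤ 1)
    (P : Matrix (Fin n) (Fin n) ℝ) (hP : P.PosSemidef)
    (hsd : ∀ i < n, 1 ≤ sdiagSum P i) :
    γ n + 2 * ∑ i ∈ Finset.Icc 1 (n - 1), γ i ≤ P.trace := by
  have hPt : Pᵀ = P := by
    simpa only [conjTranspose_eq_transpose_of_trivial] using hP.isHermitian.eq
  have hdual : (toeplitz n γ * P).trace ≤ P.trace := by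
    have := (posSemidef_one_sub_of_norm_toEuclideanCLM_le_one (isHermitian_toeplitz n γ)
      hnorm).trace_mul_nonneg hP
    rwa [sub_mul, Matrix.one_mul, trace_sub, sub_nonneg] at this
  have hdiag : γ n ≤ γ n * sdiagSum P 0 :=
    le_mul_of_one_le_right (hpos n hn le_rfl) (hsd 0 hn)
  have hoff : ∑ d ∈ Ico 1 n, γ (n - d) ≤ ∑ d ∈ Ico 1 n, γ (n - d) * sdiagSum P d :=
    sum_le_sum fun d hd => by
      rw [mem_Ico] at hd
      exact le_mul_of_one_le_right (hpos _ (by omega) (by omega)) (hsd d hd.2)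
  rw [sum_Ico_sub_eq_sum_Icc] at hoff
  rw [trace_toeplitz_mul_eq hn γ hPt] at hdual
  linarith
end
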